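/- (Transfer of the Poincaré constant from the full domain to a subset) Let Ω_ℓ ⊆ ℝ^N be open bounded with Poincaré–Wirtinger constant σ(Ω_ℓ) > 0 (so ∫_{Ω_ℓ}(u − ū)² ≤ σ(Ω_ℓ)^{-1} ∫_{Ω_ℓ}|∇u|² for all u ∈ H¹(Ω_ℓ), ū the mean of u). Let A ⊆ Ω_ℓ have positive measure. Then for any u ∈ H¹(Ω_ℓ) with ∫_A u = 0, ∫_{Ω_ℓ} u² dx ≤ (2(1 + (|Ω_ℓ|/|A|)²)/σ(Ω_ℓ)) ∫_{Ω_ℓ} |∇u|² dx; equivalently σ(Ω_ℓ, A) ≥ σ(Ω_ℓ)/(2(1 + (|Ω_ℓ|/|A|)²)). -/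

import Mathlib

open MeasureTheory

/-! With `b` the mean of `u` over `Ω` and `w = u - b`, one has `∫_Ω u² = ∫_Ω w² + |Ω| b²`, while
`∫_A u = 0` gives `|A| b² ≤ ∫_A w² ≤ ∫_Ω w²`. Hence `∫_Ω u² ≤ (1 + |Ω|/|A|) ∫_Ω w²`, and the
Poincaré–Wirtinger inequality bounds `∫_Ω w²`; finally `1 + t ≤ 2 (1 + t²)`. -/

namespace MeasureTheory

variable {α : Type*} [MeasurableSpace α] {μ ν : Measure α} [IsFiniteMeasure μ] {f : α → ℝ}

theorem integral_sub_const_sq (hf : MemLp f 2 μ) (c : ℝ) :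
    ∫ x, (f x - c) ^ 2 ∂μ = ∫ x, f x ^ 2 ∂μ - 2 * c * ∫ x, f x ∂μ + μ.real Set.univ * c ^ 2 := by
  have hlin : Integrable (fun x => 2 * c * f x) μ := (hf.integrable one_le_two).const_mul _
  have hquad : Integrable (fun x => f x ^ 2 - 2 * c * f x) μ := hf.integrable_sq.sub hlin
  have hexpand : ∀ x, (f x - c) ^ 2 = f x ^ 2 - 2 * c * f x + c ^ 2 := fun x => by ring
  simp_rw [hexpand]
  rw [integral_add hquad (integrable_const _), integral_sub hf.integrable_sq hlin,
    integral_const_mul, integral_const, smul_eq_mul]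

theorem integral_sub_average_sq (hf : MemLp f 2 μ) :
    ∫ x, (f x - ⨍ y, f y ∂μ) ^ 2 ∂μ = ∫ x, f x ^ 2 ∂μ - μ.real Set.univ * (⨍ y, f y ∂μ) ^ 2 := by
  rw [integral_sub_const_sq hf, ← measure_smul_average μ f, smul_eq_mul]
  ring

theorem measureReal_univ_mul_sq_le_integral_sub_const_sq (hνμ : ν ≤ μ) (hf : MemLp f 2 μ)
    (hfν : ∫ x, f x ∂ν = 0) (c : ℝ) :
    ν.real Set.univ * c ^ 2 ≤ ∫ x, (f x - c) ^ 2 ∂μ := by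
  have : IsFiniteMeasure ν := isFiniteMeasure_of_le μ hνμ
  calc ν.real Set.univ * c ^ 2
      ≤ ∫ x, f x ^ 2 ∂ν - 2 * c * ∫ x, f x ∂ν + ν.real Set.univ * c ^ 2 := by
        rw [hfν]
        have : 0 ≤ ∫ x, f x ^ 2 ∂ν := integral_nonneg fun x => sq_nonneg (f x)
        linarith
    _ = ∫ x, (f x - c) ^ 2 ∂ν := (integral_sub_const_sq (hf.mono_measure hνμ) c).symm
    _ ≤ ∫ x, (f x - c) ^ 2 ∂μ :=
        integral_mono_measure hνμ (.of_forall fun x => sq_nonneg _)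
          (hf.sub (memLp_const c)).integrable_sq

theorem integral_sq_le_of_integral_eq_zero (hνμ : ν ≤ μ) (hν : 0 < ν.real Set.univ)
    (hf : MemLp f 2 μ) (hfν : ∫ x, f x ∂ν = 0) :
    ∫ x, f x ^ 2 ∂μ ≤
      (1 + μ.real Set.univ / ν.real Set.univ) * ∫ x, (f x - ⨍ y, f y ∂μ) ^ 2 ∂μ := by
  have hvariance := integral_sub_average_sq hf
  set c := ⨍ y, f y ∂μ
  set W := ∫ x, (f x - c) ^ 2 ∂μ
  have hνc : ν.real Set.univ * c ^ 2 ≤ W :=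
    measureReal_univ_mul_sq_le_integral_sub_const_sq hνμ hf hfν c
  calc ∫ x, f x ^ 2 ∂μ = W + μ.real Set.univ / ν.real Set.univ * (ν.real Set.univ * c ^ 2) := by
        rw [← mul_assoc, div_mul_cancel₀ _ hν.ne']
        linarith
    _ ≤ W + μ.real Set.univ / ν.real Set.univ * W := by gcongr
    _ = (1 + μ.real Set.univ / ν.real Set.univ) * W := by ring

end MeasureTheory

theorem poincare_constant_transfer_general {N : ℕ}
    (Ωl : Set (EuclideanSpace ℝ (Fin N)))
    (hΩlfin : volume Ωl < ⊤)
    (σ : ℝ)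
    (hPoin : ∀ v : EuclideanSpace ℝ (Fin N) → ℝ,
      (∀ x ∈ Ωl, DifferentiableAt ℝ v x) →
      MemLp v 2 (volume.restrict Ωl) →
      MemLp (fun x => ‖gradient v x‖) 2 (volume.restrict Ωl) →
      ∫ x in Ωl, (v x - (volume Ωl).toReal⁻¹ * ∫ y in Ωl, v y) ^ 2 ≤
        σ⁻¹ * ∫ x in Ωl, ‖gradient v x‖ ^ 2)
    (A : Set (EuclideanSpace ℝ (Fin N)))
    (hA : A ⊆ Ωl) (hApos : 0 < volume A)
    (u : EuclideanSpace ℝ (Fin N) → ℝ)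
    (hudiff : ∀ x ∈ Ωl, DifferentiableAt ℝ u x)
    (huL2 : MemLp u 2 (volume.restrict Ωl))
    (hgradL2 : MemLp (fun x => ‖gradient u x‖) 2 (volume.restrict Ωl))
    (hmeanA : ∫ x in A, u x = 0) :
    ∫ x in Ωl, (u x) ^ 2 ≤
      (2 * (1 + ((volume Ωl).toReal / (volume A).toReal) ^ 2) / σ) *
        ∫ x in Ωl, ‖gradient u x‖ ^ 2 := by
  have : IsFiniteMeasure (volume.restrict Ωl) := isFiniteMeasure_restrict.2 hΩlfin.ne
  have hAreal : 0 < (volume.restrict A).real Set.univ := by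
    rw [measureReal_restrict_apply_univ]
    exact ENNReal.toReal_pos hApos.ne' (measure_ne_top_of_subset hA hΩlfin.ne)
  have htransfer :=
    integral_sq_le_of_integral_eq_zero (Measure.restrict_mono hA le_rfl) hAreal huL2 hmeanA
  simp only [setAverage_eq, measureReal_def, Measure.restrict_apply_univ, smul_eq_mul]
    at htransfer
  have hpoincare := hPoin u hudiff huL2 hgradL2
  set r := (volume Ωl).toReal / (volume A).toReal
  have hr : 1 + r ≤ 2 * (1 + r ^ 2) := by nlinarith [sq_nonneg (r - 1 / 4)]
  have hvariance_nonneg : 0 ≤ ∫ x in Ωl, (u x - (volume Ωl).toReal⁻¹ * ∫ y in Ωl, u y) ^ 2 :=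
    integral_nonneg fun x => sq_nonneg _
  calc ∫ x in Ωl, u x ^ 2
      ≤ (1 + r) * ∫ x in Ωl, (u x - (volume Ωl).toReal⁻¹ * ∫ y in Ωl, u y) ^ 2 := htransfer
    _ ≤ 2 * (1 + r ^ 2) * (σ⁻¹ * ∫ x in Ωl, ‖gradient u x‖ ^ 2) :=
        mul_le_mul hr hpoincare hvariance_nonneg (by positivity)
    _ = 2 * (1 + r ^ 2) / σ * ∫ x in Ωl, ‖gradient u x‖ ^ 2 := by ring

/-- Transfer of the Poincaré constant from the full domain `Ω_ℓ` to a subset `A`: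
if the Poincaré–Wirtinger inequality holds on `Ω_ℓ` with constant `σ(Ω_ℓ) > 0`, and
`u ∈ H¹(Ω_ℓ)` has mean zero on `A ⊆ Ω_ℓ` with `|A| > 0`, then
`∫_{Ω_ℓ} u² ≤ (2(1 + (|Ω_ℓ|/|A|)²)/σ(Ω_ℓ)) ∫_{Ω_ℓ} |∇u|²`. -/
theorem poincare_constant_transfer {N : ℕ}
    (Ωl : Set (EuclideanSpace ℝ (Fin N)))
    (hΩlopen : IsOpen Ωl) (hΩlbdd : Bornology.IsBounded Ωl)
    (hΩlpos : 0 < volume Ωl) (hΩlfin : volume Ωl < ⊤)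
    (σ : ℝ) (hσ : 0 < σ)
    (hPoin : ∀ v : EuclideanSpace ℝ (Fin N) → ℝ,
      (∀ x ∈ Ωl, DifferentiableAt ℝ v x) →
      MemLp v 2 (volume.restrict Ωl) →
      MemLp (fun x => ‖gradient v x‖) 2 (volume.restrict Ωl) →
      ∫ x in Ωl, (v x - (volume Ωl).toReal⁻¹ * ∫ y in Ωl, v y) ^ 2 ≤
        σ⁻¹ * ∫ x in Ωl, ‖gradient v x‖ ^ 2)
    (A : Set (EuclideanSpace ℝ (Fin N))) (hAmeas : MeasurableSet A)
    (hA : A ⊆ Ωl) (hApos : 0 < volume A)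
    (u : EuclideanSpace ℝ (Fin N) → ℝ)
    (hudiff : ∀ x ∈ Ωl, DifferentiableAt ℝ u x)
    (huL2 : MemLp u 2 (volume.restrict Ωl))
    (hgradL2 : MemLp (fun x => ‖gradient u x‖) 2 (volume.restrict Ωl))
    (hmeanA : ∫ x in A, u x = 0) :
    ∫ x in Ωl, (u x) ^ 2 ≤
      (2 * (1 + ((volume Ωl).toReal / (volume A).toReal) ^ 2) / σ) *
        ∫ x in Ωl, ‖gradient u x‖ ^ 2 :=
  poincare_constant_transfer_general Ωl hΩlfin σ hPoin A hA hApos u hudiff huL2 hgradL2 hmeanA
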